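/- arXiv:cs/0502092 — 5 statements merged into one kernel-verified Lean document; each statement's English description precedes it below -/
import Mathlib

section
/- Let φ₀(x) = max(0, 1 − |x|), φ₁(x) = ∫_{x−1}^{x} φ₀(t) dt, and define the spline wavelets ψ₀(x) = 2·( −(1/8)φ₀(2x + 1) − (1/4)φ₀(2x) + (3/4)φ₀(2x − 1) − (1/4)φ₀(2x − 2) − (1/8)φ₀(2x − 3) ) and ψ₁(x) = 2·( −(1/4)φ₁(2x + 1) − (3/4)φ₁(2x) + (3/4)φ₁(2x − 1) + (1/4)φ₁(2x − 2) ). Then ψ₁ is differentiable at every point of ℝ and ψ₁′(x) = 4·ψ₀(x) for all x ∈ ℝ. -/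
/-- The hat function (piecewise-linear B-spline of degree 1). -/
noncomputable def phi0 (x : ℝ) : ℝ := max 0 (1 - |x|)

/-- The quadratic B-spline. -/
noncomputable def phi1 (x : ℝ) : ℝ := ∫ t in (x - 1)..x, phi0 t

/-- The shortest-support biorthogonal spline wavelet of degree 1. -/
noncomputable def psi0 (x : ℝ) : ℝ :=
  2 * (-(1 / 8) * phi0 (2 * x + 1) - (1 / 4) * phi0 (2 * x)
    + (3 / 4) * phi0 (2 * x - 1) - (1 / 4) * phi0 (2 * x - 2)
    - (1 / 8) * phi0 (2 * x - 3))

/-- The shortest-support biorthogonal spline wavelet of degree 2. -/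
noncomputable def psi1 (x : ℝ) : ℝ :=
  2 * (-(1 / 4) * phi1 (2 * x + 1) - (3 / 4) * phi1 (2 * x)
    + (3 / 4) * phi1 (2 * x - 1) + (1 / 4) * phi1 (2 * x - 2))

/-!
By the fundamental theorem of calculus `φ₁′(x) = φ₀(x) − φ₀(x − 1)`, so differentiating `ψ₁` term
by term replaces its filter by its finite difference, times the factor `2` of the dilation. The
difference of `(−1/4, −3/4, 3/4, 1/4)` is `(−1/4, −1/2, 3/2, −1/2, −1/4)`, which is twice the
filter `(−1/8, −1/4, 3/4, −1/4, −1/8)` of `ψ₀`; hence `ψ₁′ = 4ψ₀`.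
-/

theorem Continuous.hasDerivAt_integral_sub_const {E : Type*} [NormedAddCommGroup E]
    [NormedSpace ℝ E] [CompleteSpace E] {f : ℝ → E} (hf : Continuous f) (h x : ℝ) :
    HasDerivAt (fun u => ∫ t in (u - h)..u, f t) (f x - f (x - h)) x := by
  have hF (a : ℝ) : HasDerivAt (fun u => ∫ t in (0 : ℝ)..u, f t) (f a) a :=
    (hf.integral_hasStrictDerivAt 0 a).hasDerivAt
  refine ((hF x).sub ((hF (x - h)).comp_sub_const x h)).congr_of_eventuallyEq ?_
  filter_upwards with u
  exact (intervalIntegral.integral_interval_sub_left (hf.intervalIntegrable _ _)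
    (hf.intervalIntegrable _ _)).symm

theorem continuous_phi0 : Continuous phi0 := by
  unfold phi0
  fun_prop

theorem hasDerivAt_phi1 (x : ℝ) : HasDerivAt phi1 (phi0 x - phi0 (x - 1)) x :=
  continuous_phi0.hasDerivAt_integral_sub_const 1 x

theorem HasDerivAt.phi1 {f : ℝ → ℝ} {f' x : ℝ} (hf : HasDerivAt f f' x) :
    HasDerivAt (fun y => phi1 (f y)) ((phi0 (f x) - phi0 (f x - 1)) * f') x :=
  (hasDerivAt_phi1 (f x)).comp x hf

theorem psi1_hasDerivAt :
    ∀ x : ℝ, HasDerivAt psi1 (4 * psi0 x) x := by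
  intro x
  have h2 : HasDerivAt (fun y : ℝ => 2 * y) 2 x := by
    simpa using (hasDerivAt_id x).const_mul 2
  have hterms := ((((h2.add_const 1).phi1.const_mul (-(1 / 4))).sub (h2.phi1.const_mul (3 / 4))).add
    ((h2.sub_const 1).phi1.const_mul (3 / 4))).add ((h2.sub_const 2).phi1.const_mul (1 / 4))
  refine (hterms.const_mul 2).congr_deriv ?_
  rw [psi0]
  ring_nf
end

section
/- Let φ₀, ψ₀ : ℝ → ℝ be functions, and let φ₁, ψ₁ : ℝ → ℝ be differentiable with φ₁′(x) = φ₀(x) − φ₀(x − 1) and ψ₁′(x) = 4ψ₀(x) for all x. Then the three vector fields on ℝ² defined by Ψ_div^{(1,0)}(x₁,x₂) = ( −(1/4)ψ₁(x₁)(φ₀(x₂) − φ₀(x₂−1)), ψ₀(x₁)φ₁(x₂) ), Ψ_div^{(0,1)}(x₁,x₂) = ( φ₁(x₁)ψ₀(x₂), −(1/4)(φ₀(x₁) − φ₀(x₁−1))ψ₁(x₂) ), and Ψ_div^{(1,1)}(x₁,x₂) = ( ψ₁(x₁)ψ₀(x₂), −ψ₀(x₁)ψ₁(x₂) ) each have zero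 divergence at every point of ℝ². -/
/-!
Each of the three fields is the curl `(∂₂S, -∂₁S)` of a separable stream function, namely
`S = -¼ ψ₁(x₁) φ₁(x₂)`, `S = ¼ φ₁(x₁) ψ₁(x₂)` and `S = ¼ ψ₁(x₁) ψ₁(x₂)`, so its divergence is
`∂₁∂₂S - ∂₂∂₁S = 0`.
-/

/-- The three generating isotropic 2D divergence-free wavelets
`Ψ_div^{(1,0)}`, `Ψ_div^{(0,1)}`, `Ψ_div^{(1,1)}` have zero divergence
`∂₁F¹ + ∂₂F² = 0` at every point of `ℝ²`. -/
theorem isotropic_2D_divfree_wavelets (φ₀ φ₁ ψ₀ ψ₁ : ℝ → ℝ)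
    (hφ₁ : ∀ x : ℝ, HasDerivAt φ₁ (φ₀ x - φ₀ (x - 1)) x)
    (hψ₁ : ∀ x : ℝ, HasDerivAt ψ₁ (4 * ψ₀ x) x) :
    ∀ x₁ x₂ : ℝ,
      (deriv (fun t => -(1 / 4) * ψ₁ t * (φ₀ x₂ - φ₀ (x₂ - 1))) x₁
          + deriv (fun t => ψ₀ x₁ * φ₁ t) x₂ = 0)
      ∧ (deriv (fun t => φ₁ t * ψ₀ x₂) x₁
          + deriv (fun t => -(1 / 4) * (φ₀ x₁ - φ₀ (x₁ - 1)) * ψ₁ t) x₂ = 0)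
      ∧ (deriv (fun t => ψ₁ t * ψ₀ x₂) x₁
          + deriv (fun t => -(ψ₀ x₁ * ψ₁ t)) x₂ = 0) := by
  have hφ₁_deriv : deriv φ₁ = fun x => φ₀ x - φ₀ (x - 1) := funext fun x => (hφ₁ x).deriv
  have hψ₁_deriv : deriv ψ₁ = fun x => 4 * ψ₀ x := funext fun x => (hψ₁ x).deriv
  intro x₁ x₂
  simp only [deriv.fun_neg, deriv_mul_const_field, deriv_const_mul_field, hφ₁_deriv, hψ₁_deriv]
  refine ⟨by ring, by ring, by ring⟩
end

section
/- Let φ₀, ψ₀ : ℝ → ℝ be functions, and let φ₁, ψ₁ : ℝ → ℝ be differentiable with φ₁′(x) = φ₀(x) − φ₀(x − 1) and ψ₁′(x) = 4ψ₀(x) for all x. Then the three vector fields on ℝ³ defined by Ψ_{div,1}^{(1,0,0)}(x) = ( −(1/4)ψ₁(x₁)(φ₀(x₂) − φ₀(x₂−1))φ₀(x₃), ψ₀(x₁)φ₁(x₂)φ₀(x₃), 0 ), Ψ_{div,2}^{(1,1,0)}(x) = ( −(1/8)ψ₁(x₁)ψ₀(x₂)(φ₀(x₃) − φ₀(x₃−1)),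 −(1/8)ψ₀(x₁)ψ₁(x₂)(φ₀(x₃) − φ₀(x₃−1)), ψ₀(x₁)ψ₀(x₂)φ₁(x₃) ), and Ψ_{div,1}^{(1,1,1)}(x) = ( −ψ₁(x₁)ψ₀(x₂)ψ₀(x₃), 0, ψ₀(x₁)ψ₀(x₂)ψ₁(x₃) ) each have zero divergence at every point of ℝ³. -/
/-- Three generating isotropic 3D divergence-free wavelets
(`Ψ_{div,1}^{(1,0,0)}`, `Ψ_{div,2}^{(1,1,0)}` and `Ψ_{div,1}^{(1,1,1)}`) have zero
divergence `∂₁F¹ + ∂₂F² + ∂₃F³ = 0` at every point of `ℝ³`. -/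
theorem isotropic_3D_divfree_wavelets (φ₀ φ₁ ψ₀ ψ₁ : ℝ → ℝ)
    (hφ₁ : ∀ x : ℝ, HasDerivAt φ₁ (φ₀ x - φ₀ (x - 1)) x)
    (hψ₁ : ∀ x : ℝ, HasDerivAt ψ₁ (4 * ψ₀ x) x) :
    ∀ x₁ x₂ x₃ : ℝ,
      (deriv (fun t => -(1 / 4) * ψ₁ t * (φ₀ x₂ - φ₀ (x₂ - 1)) * φ₀ x₃) x₁
          + deriv (fun t => ψ₀ x₁ * φ₁ t * φ₀ x₃) x₂
          + deriv (fun _ : ℝ => (0 : ℝ)) x₃ = 0)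
      ∧ (deriv (fun t => -(1 / 8) * ψ₁ t * ψ₀ x₂ * (φ₀ x₃ - φ₀ (x₃ - 1))) x₁
          + deriv (fun t => -(1 / 8) * ψ₀ x₁ * ψ₁ t * (φ₀ x₃ - φ₀ (x₃ - 1))) x₂
          + deriv (fun t => ψ₀ x₁ * ψ₀ x₂ * φ₁ t) x₃ = 0)
      ∧ (deriv (fun t => -(ψ₁ t * ψ₀ x₂ * ψ₀ x₃)) x₁
          + deriv (fun _ : ℝ => (0 : ℝ)) x₂
          + deriv (fun t => ψ₀ x₁ * ψ₀ x₂ * ψ₁ t) x₃ = 0) := by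
  have dφ₁ (x : ℝ) : deriv φ₁ x = φ₀ x - φ₀ (x - 1) := (hφ₁ x).deriv
  have dψ₁ (x : ℝ) : deriv ψ₁ x = 4 * ψ₀ x := (hψ₁ x).deriv
  intro x₁ x₂ x₃
  simp only [deriv_mul_const_field', deriv_const_mul_field', deriv.fun_neg, deriv_const',
    dφ₁, dψ₁]
  refine ⟨?_, ?_, ?_⟩ <;> ring
end

section
/- Let ψ, p : ℝ² → ℝ be smooth compactly supported functions such that (∂ψ/∂x₂, −∂ψ/∂x₁) = (∂p/∂x₁, ∂p/∂x₂) at every point of ℝ². Then ψ = 0 and p = 0 identically. -/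
open Complex Set Bornology

/-- If `ψ, p : ℝ² → ℝ` are smooth compactly supported and
`(∂₂ψ, −∂₁ψ) = (∂₁p, ∂₂p)` everywhere, then `ψ = 0` and `p = 0`. -/
theorem curl_eq_grad_implies_zero (ψ p : ℝ × ℝ → ℝ)
    (hψ : ContDiff ℝ (⊤ : ℕ∞) ψ) (hψc : HasCompactSupport ψ)
    (hp : ContDiff ℝ (⊤ : ℕ∞) p) (hpc : HasCompactSupport p)
    (h : ∀ x : ℝ × ℝ,
      ((fderiv ℝ ψ x (0, 1), -(fderiv ℝ ψ x (1, 0))) : ℝ × ℝ)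
        = (fderiv ℝ p x (1, 0), fderiv ℝ p x (0, 1))) :
    (∀ x : ℝ × ℝ, ψ x = 0) ∧ (∀ x : ℝ × ℝ, p x = 0) := by
  -- the embedding ℂ → ℝ × ℝ
  set e : ℂ →L[ℝ] ℝ × ℝ := (Complex.equivRealProdCLM : ℂ ≃L[ℝ] ℝ × ℝ).toContinuousLinearMap with he
  have he_apply : ∀ z : ℂ, e z = (z.re, z.im) := fun z => rfl
  -- the would-be holomorphic function
  set G : ℝ × ℝ → ℂ := fun q => (p q : ℂ) + (ψ q : ℂ) * Complex.I with hG
  set F : ℂ → ℂ := fun z => G (e z) with hF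
  -- F is complex differentiable
  have hFdiff : Differentiable ℂ F := by
    intro z
    have hpz : HasFDerivAt (fun w : ℂ => p (e w))
        ((fderiv ℝ p (e z)).comp e) z :=
      ((hp.differentiable (by simp) (e z)).hasFDerivAt).comp z (e.hasFDerivAt)
    have hψz : HasFDerivAt (fun w : ℂ => ψ (e w))
        ((fderiv ℝ ψ (e z)).comp e) z :=
      ((hψ.differentiable (by simp) (e z)).hasFDerivAt).comp z (e.hasFDerivAt)
    have hpz' : HasFDerivAt (fun w : ℂ => ((p (e w) : ℂ)))
        (Complex.ofRealCLM.comp ((fderiv ℝ p (e z)).comp e)) z :=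
      Complex.ofRealCLM.hasFDerivAt.comp z hpz
    have hψz' : HasFDerivAt (fun w : ℂ => ((ψ (e w) : ℂ)))
        (Complex.ofRealCLM.comp ((fderiv ℝ ψ (e z)).comp e)) z :=
      Complex.ofRealCLM.hasFDerivAt.comp z hψz
    have hψzI : HasFDerivAt (fun w : ℂ => Complex.I • ((ψ (e w) : ℂ)))
        (Complex.I • Complex.ofRealCLM.comp ((fderiv ℝ ψ (e z)).comp e)) z :=
      hψz'.const_smul Complex.I
    have hL : HasFDerivAt F
        (Complex.ofRealCLM.comp ((fderiv ℝ p (e z)).comp e)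
          + Complex.I • Complex.ofRealCLM.comp ((fderiv ℝ ψ (e z)).comp e)) z := by
      have := hpz'.add hψzI
      have hfun : ((fun w : ℂ => ((p (e w) : ℂ))) + fun w : ℂ => Complex.I • ((ψ (e w) : ℂ))) = F := by
        funext w
        simp [hF, hG, smul_eq_mul]
        ring
      rw [hfun] at this
      exact this
    -- the real derivative is complex linear, by Cauchy–Riemann
    set u : ℝ := fderiv ℝ p (e z) (1, 0) with hu
    set v : ℝ := fderiv ℝ ψ (e z) (1, 0) with hv
    have hCR := h (e z)
    have h1 : fderiv ℝ ψ (e z) (0, 1) = u := (Prod.ext_iff.mp hCR).1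
    have h2 : fderiv ℝ p (e z) (0, 1) = -v := ((Prod.ext_iff.mp hCR).2).symm
    set c : ℂ := (u : ℂ) + (v : ℂ) * Complex.I with hc
    set M : ℂ →L[ℂ] ℂ := c • (ContinuousLinearMap.id ℂ ℂ) with hM
    have key : HasFDerivAt F M z := by
      apply hasFDerivAt_of_restrictScalars ℝ hL
      apply ContinuousLinearMap.ext
      intro w
      have hw : e w = (w.re, w.im) := rfl
      have hwdec : (w.re, w.im) = w.re • ((1 : ℝ), (0 : ℝ)) + w.im • ((0 : ℝ), (1 : ℝ)) := by
        simp [Prod.ext_iff]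
      have hdp : fderiv ℝ p (e w) = fderiv ℝ p (e w) := rfl
      have expp : fderiv ℝ p (e z) (e w) = w.re * u + w.im * (-v) := by
        rw [hw, hwdec, map_add, map_smul, map_smul, h2, hu]
        simp [smul_eq_mul]
      have expψ : fderiv ℝ ψ (e z) (e w) = w.re * v + w.im * u := by
        rw [hw, hwdec, map_add, map_smul, map_smul, h1, hv]
        simp [smul_eq_mul]
      simp only [ContinuousLinearMap.coe_restrictScalars',
        ContinuousLinearMap.add_apply, ContinuousLinearMap.coe_comp',
        Function.comp_apply, ContinuousLinearMap.coe_smul',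
        Pi.smul_apply, ContinuousLinearMap.smul_apply, hM,
        ContinuousLinearMap.id_apply, Complex.ofRealCLM_apply]
      rw [expp, expψ, hc]
      apply Complex.ext <;> simp [smul_eq_mul] <;> ring
    exact key.differentiableAt
  -- F has compact support
  have hGc : HasCompactSupport G := by
    have hsub : Function.support G ⊆ tsupport p ∪ tsupport ψ := by
      intro q hq
      by_contra hq'
      simp only [mem_union, not_or] at hq'
      have hp0 : p q = 0 := image_eq_zero_of_notMem_tsupport hq'.1
      have hψ0 : ψ q = 0 := image_eq_zero_of_notMem_tsupport hq'.2
      apply hq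
      simp [hG, hp0, hψ0]
    have hKc : IsCompact (tsupport p ∪ tsupport ψ) := hpc.union hψc
    exact hKc.of_isClosed_subset (isClosed_closure)
      (closure_minimal hsub (hpc.isClosed.union hψc.isClosed))
  have hFc : HasCompactSupport F :=
    hGc.comp_homeomorph Complex.equivRealProdCLM.toHomeomorph
  -- F is bounded, hence constant, hence zero
  have hFb : IsBounded (range F) :=
    (hFc.isCompact_range (hFdiff.continuous)).isBounded
  obtain ⟨z₀, hz₀⟩ : ∃ z₀ : ℂ, z₀ ∉ tsupport F := by
    rcases (Set.ne_univ_iff_exists_notMem (tsupport F)).mp hFc.ne_univ with ⟨z₀, hz₀⟩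
    exact ⟨z₀, hz₀⟩
  have hF0 : ∀ z : ℂ, F z = 0 := by
    intro z
    calc F z = F z₀ := hFdiff.apply_eq_apply_of_bounded hFb z z₀
    _ = 0 := image_eq_zero_of_notMem_tsupport hz₀
  -- conclude
  have key : ∀ x : ℝ × ℝ, ψ x = 0 ∧ p x = 0 := by
    intro x
    have hx : e (Complex.equivRealProdCLM.symm x) = x := by
      simp [he]
    have := hF0 (Complex.equivRealProdCLM.symm x)
    simp only [hF] at this
    rw [hx] at this
    have hre := congrArg Complex.re this
    have him := congrArg Complex.im this
    simp [hG] at hre him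
    exact ⟨him, hre⟩
  exact ⟨fun x => (key x).1, fun x => (key x).2⟩
end

section
/- Let f : ℝ → ℝ be four times continuously differentiable with |f⁗(t)| ≤ M for all t ∈ ℝ, let N ≥ 1 be an integer, and for each m ∈ ℤ define the quasi-interpolation coefficient c̃_m = (5/8)( f(m/N) + f((m+1)/N) ) − (1/8)( f((m−1)/N) + f((m+2)/N) ). Then for every ℓ ∈ ℤ, | (1/2)(c̃_{ℓ−1} + c̃_ℓ) − f(ℓ/N) | ≤ (5/48)·M·N^{−4}. -/
/-!
At a node `x = ℓ/N` with spacing `h = 1/N` the quasi-interpolant equals the stencil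
`(5/8) f(x) + (1/4)(f(x-h) + f(x+h)) - (1/16)(f(x-2h) + f(x+2h))`, which reproduces cubic
polynomials exactly. Expanding each value to third order around `x`, the error is therefore the
same combination of the Lagrange remainders, bounded by `M s⁴/24` at offset `s`; this gives
`(1/4)·2·M h⁴/24 + (1/16)·2·M (2h)⁴/24 = (5/48) M h⁴`.
-/

open Finset Set
open scoped Nat

noncomputable def taylorSum (f : ℝ → ℝ) (n : ℕ) (x₀ x : ℝ) : ℝ :=
  ∑ k ∈ range (n + 1), (x - x₀) ^ k / k ! * iteratedDeriv k f x₀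

lemma taylorWithinEval_uIcc_eq_taylorSum {f : ℝ → ℝ} {n : ℕ} (hf : ContDiff ℝ n f) {x₀ x : ℝ}
    (hx : x₀ ≠ x) : taylorWithinEval f n (uIcc x₀ x) x₀ x = taylorSum f n x₀ x := by
  rw [taylor_within_apply, taylorSum]
  refine sum_congr rfl fun k hk => ?_
  rw [iteratedDerivWithin_eq_iteratedDeriv (uniqueDiffOn_uIcc hx)
    (hf.contDiffAt.of_le (by exact_mod_cast Nat.lt_succ_iff.mp (mem_range.mp hk)))
    left_mem_uIcc, smul_eq_mul]
  ring

lemma abs_sub_taylorSum_le {f : ℝ → ℝ} {n : ℕ} {M : ℝ} (hf : ContDiff ℝ (n + 1) f)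
    (hM : ∀ t, |iteratedDeriv (n + 1) f t| ≤ M) (x₀ x : ℝ) :
    |f x - taylorSum f n x₀ x| ≤ M * |x - x₀| ^ (n + 1) / (n + 1)! := by
  rcases eq_or_ne x₀ x with rfl | hx
  · simp [taylorSum, sum_range_succ']
  obtain ⟨x', -, hx'⟩ := taylor_mean_remainder_lagrange_iteratedDeriv hx hf.contDiffOn
  rw [← taylorWithinEval_uIcc_eq_taylorSum (hf.of_le (by norm_cast; omega)) hx, hx', abs_div,
    abs_mul, abs_pow, Nat.abs_cast]
  gcongr
  exact hM x'

noncomputable def quasiInterpolantAtNode (f : ℝ → ℝ) (x h : ℝ) : ℝ :=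
  5 / 8 * f x + 1 / 4 * (f (x - h) + f (x + h)) - 1 / 16 * (f (x - 2 * h) + f (x + 2 * h))

lemma quasiInterpolantAtNode_sub_eq (f : ℝ → ℝ) (x h : ℝ) :
    quasiInterpolantAtNode f x h - f x =
      1 / 4 * ((f (x - h) - taylorSum f 3 x (x - h)) + (f (x + h) - taylorSum f 3 x (x + h)))
        - 1 / 16 * ((f (x - 2 * h) - taylorSum f 3 x (x - 2 * h))
          + (f (x + 2 * h) - taylorSum f 3 x (x + 2 * h))) := by
  simp only [quasiInterpolantAtNode, taylorSum, sum_range_succ, sum_range_zero, Nat.factorial,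
    iteratedDeriv_zero]
  push_cast
  ring

lemma abs_quasiInterpolantAtNode_sub_le {f : ℝ → ℝ} {M : ℝ} (hf : ContDiff ℝ 4 f)
    (hM : ∀ t, |iteratedDeriv 4 f t| ≤ M) (x h : ℝ) :
    |quasiInterpolantAtNode f x h - f x| ≤ 5 / 48 * M * h ^ 4 := by
  have hR (s : ℝ) : |f (x + s) - taylorSum f 3 x (x + s)| ≤ M * s ^ 4 / 24 := by
    simpa [Nat.factorial, pow_abs, Even.pow_abs ⟨2, rfl⟩] using abs_sub_taylorSum_le hf hM x (x + s)
  have h₁ := hR (-h)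
  have h₂ := hR h
  have h₃ := hR (-(2 * h))
  have h₄ := hR (2 * h)
  simp only [← sub_eq_add_neg, Even.neg_pow ⟨2, rfl⟩] at h₁ h₃
  rw [quasiInterpolantAtNode_sub_eq, abs_le]
  rw [abs_le] at h₁ h₂ h₃ h₄
  constructor <;> linarith

theorem quasi_interpolation_error_general (f : ℝ → ℝ) (M : ℝ)
    (hf : ContDiff ℝ 4 f)
    (hM : ∀ t : ℝ, |iteratedDeriv 4 f t| ≤ M)
    (N : ℕ)
    (c : ℤ → ℝ)
    (hc : ∀ m : ℤ, c m =
      (5 / 8) * (f (m / N) + f ((m + 1) / N))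
        - (1 / 8) * (f ((m - 1) / N) + f ((m + 2) / N))) :
    ∀ ℓ : ℤ,
      |(1 / 2) * (c (ℓ - 1) + c ℓ) - f (ℓ / N)|
        ≤ (5 / 48) * M / (N : ℝ) ^ 4 := by
  intro ℓ
  have hnode : (1 / 2) * (c (ℓ - 1) + c ℓ) = quasiInterpolantAtNode f (ℓ / N) (1 / N) := by
    simp only [hc, quasiInterpolantAtNode]
    push_cast
    ring_nf
  rw [hnode]
  simpa [div_eq_mul_inv] using abs_quasiInterpolantAtNode_sub_le hf hM (ℓ / N) (1 / N)

/-- Fourth-order accuracy at grid points of the quadratic-spline quasi-interpolation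
with coefficients `c̃_m = (5/8)(f(m/N)+f((m+1)/N)) − (1/8)(f((m−1)/N)+f((m+2)/N))`. -/
theorem quasi_interpolation_error (f : ℝ → ℝ) (M : ℝ)
    (hf : ContDiff ℝ 4 f)
    (hM : ∀ t : ℝ, |iteratedDeriv 4 f t| ≤ M)
    (N : ℕ) (hN : 1 ≤ N)
    (c : ℤ → ℝ)
    (hc : ∀ m : ℤ, c m =
      (5 / 8) * (f (m / N) + f ((m + 1) / N))
        - (1 / 8) * (f ((m - 1) / N) + f ((m + 2) / N))) :
    ∀ ℓ : ℤ,
      |(1 / 2) * (c (ℓ - 1) + c ℓ) - f (ℓ / N)|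
        ≤ (5 / 48) * M / (N : ℝ) ^ 4 :=
  quasi_interpolation_error_general f M hf hM N c hc
end
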